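/- arXiv:1812.11966 — 2 statements merged into one kernel-verified Lean document; each statement's English description precedes it below -/
import Mathlib

section
/- Let (d, Q, E) be a VASS, C ⊆ {1,…,d}, q ∈ Q, v ∈ ℕ^C, v̄, δ̄ ∈ ℕ^{C̄}, Δ ∈ (ℕ≥1)^C, Δ̄ ∈ ℤ^{C̄} with δ̄ + Δ̄ ≥ 1 (coordinatewise). If there is a run from (q, v ⊕ (v̄ + δ̄)) to (q, (v + Δ) ⊕ (v̄ + δ̄ + Δ̄)), then for every m ≥ 1 there is a run from (q, v ⊕ (v̄ + m·δ̄)) to (q, (v + m·Δ) ⊕ (v̄ + m·(δ̄ + Δ̄))). -/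
/-- Vectors in `ℤ^d`. -/
abbrev Vec (d : ℕ) : Type := Fin d → ℤ

/-- An arc of a `d`-dimensional VASS with states `Q`. -/
abbrev Arc (Q : Type) (d : ℕ) : Type := Q × Vec d × Q

/-- `IsRunOn E S π q v q' v'`: the list of arcs `π` (all belonging to `E`) forms a
pseudo-run from `(q, v)` to `(q', v')`, all of whose vectors (including endpoints)
are nonnegative on every coordinate in `S`.  Taking `S = ∅` gives pseudo-runs,
`S = Set.univ` gives runs, and `S = ↑C` gives `C`-runs. -/
inductive IsRunOn {Q : Type} {d : ℕ} (E : Finset (Arc Q d)) (S : Set (Fin d)) :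
    List (Arc Q d) → Q → Vec d → Q → Vec d → Prop
  | nil (q : Q) (v : Vec d) (hv : ∀ i ∈ S, 0 ≤ v i) :
      IsRunOn E S [] q v q v
  | cons (q q' q'' : Q) (v v'' z : Vec d) (π : List (Arc Q d))
      (hv : ∀ i ∈ S, 0 ≤ v i) (he : (q, z, q') ∈ E)
      (ht : IsRunOn E S π q' (v + z) q'' v'') :
      IsRunOn E S ((q, z, q') :: π) q v q'' v''

/-- Glueing: `glue C v w` agrees with `v` on coordinates in `C` and with `w` outside `C`. -/
def glue {d : ℕ} (C : Finset (Fin d)) (v w : Vec d) : Vec d :=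
  fun i => if i ∈ C then v i else w i

lemma IsRunOn.shift {Q : Type} {d : ℕ} {E : Finset (Arc Q d)}
    {π : List (Arc Q d)} {q q' : Q} {u u' : Vec d} (w : Vec d)
    (hw : ∀ i, 0 ≤ w i)
    (h : IsRunOn E Set.univ π q u q' u') :
    IsRunOn E Set.univ π q (u + w) q' (u' + w) := by
  induction h with
  | nil q v hv =>
      exact .nil _ _ (fun i _ => add_nonneg (hv i trivial) (hw i))
  | cons q q' q'' v v'' z π hv he ht ih =>
      have he' : v + w + z = v + z + w := by ring
      exact .cons _ _ _ _ _ _ _ (fun i _ => add_nonneg (hv i trivial) (hw i)) he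
        (he' ▸ ih)

lemma IsRunOn.append {Q : Type} {d : ℕ} {E : Finset (Arc Q d)} {S : Set (Fin d)}
    {π π' : List (Arc Q d)} {q q' q'' : Q} {u u' u'' : Vec d}
    (h : IsRunOn E S π q u q' u') (h' : IsRunOn E S π' q' u' q'' u'') :
    IsRunOn E S (π ++ π') q u q'' u'' := by
  induction h with
  | nil => simpa
  | cons q q' q'' v v'' z π hv he ht ih =>
      exact .cons _ _ _ _ _ _ _ hv he (ih h')

/-- Claim 3, pumping: a run from `(q, v ⊕ (v̄ + δ̄))` to
`(q, (v + Δ) ⊕ (v̄ + δ̄ + Δ̄))` can be iterated `m` times. -/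
theorem claim_pumping {d : ℕ} {Q : Type}
    (hd : 1 ≤ d) (E : Finset (Arc Q d)) (C : Finset (Fin d)) (q : Q)
    (v vb δb Δ Δb : Vec d)
    (hv : ∀ i ∈ C, 0 ≤ v i)
    (hvb : ∀ i ∉ C, 0 ≤ vb i) (hδb : ∀ i ∉ C, 0 ≤ δb i)
    (hΔ : ∀ i ∈ C, 1 ≤ Δ i)
    (hsum : ∀ i ∉ C, 1 ≤ δb i + Δb i)
    (hrun : ∃ π, IsRunOn E Set.univ π q (glue C v (vb + δb))
      q (glue C (v + Δ) (vb + δb + Δb))) :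
    ∀ m : ℕ, 1 ≤ m →
      ∃ π, IsRunOn E Set.univ π q (glue C v (vb + (m : ℤ) • δb))
        q (glue C (v + (m : ℤ) • Δ) (vb + (m : ℤ) • (δb + Δb))) := by
  intro m hm
  obtain ⟨π₀, h₀⟩ := hrun
  -- For each 0 ≤ k, the shift vector for the (k+1)-st copy
  set w : ℤ → Vec d := fun k i =>
    if i ∈ C then k * Δ i else ((m : ℤ) - 1) * δb i + k * Δb i with hw
  have hwnn : ∀ k : ℤ, 0 ≤ k → k ≤ (m : ℤ) - 1 → ∀ i, 0 ≤ w k i := by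
    intro k hk0 hk1 i
    simp only [hw]
    split
    · rename_i hiC
      exact mul_nonneg hk0 (le_trans zero_le_one (hΔ i hiC))
    · rename_i hiC
      have h1 := hδb i hiC
      have h2 := hsum i hiC
      nlinarith [mul_nonneg hk0 h1]
  -- Key claim: k-fold iteration for 1 ≤ k ≤ m
  have key : ∀ k : ℕ, 1 ≤ k → k ≤ m →
      ∃ π, IsRunOn E Set.univ π q (glue C v (vb + (m : ℤ) • δb))
        q (glue C (v + (k : ℤ) • Δ)
            (fun i => vb i + (m : ℤ) * δb i + (k : ℤ) * Δb i)) := by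
    intro k hk1
    induction k with
    | zero => omega
    | succ n ih =>
      intro hkm
      rcases Nat.eq_or_lt_of_le hk1 with h1 | h1
      · -- base case n + 1 = 1
        have hn : n = 0 := by omega
        subst hn
        refine ⟨π₀, ?_⟩
        have hs : glue C v (vb + (m : ℤ) • δb) = glue C v (vb + δb) + w 0 := by
          funext i
          simp only [glue, hw, Pi.add_apply, Pi.smul_apply, smul_eq_mul]
          split <;> ring
        have he : glue C (v + ((0 + 1 : ℕ) : ℤ) • Δ)
            (fun i => vb i + (m : ℤ) * δb i + ((0 + 1 : ℕ) : ℤ) * Δb i)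
            = glue C (v + Δ) (vb + δb + Δb) + w 0 := by
          funext i
          simp only [glue, hw, Pi.add_apply, Pi.smul_apply, smul_eq_mul]
          split <;> push_cast <;> ring
        rw [hs, he]
        exact h₀.shift (w 0) (hwnn 0 le_rfl (by push_cast; omega))
      · -- inductive step: n ≥ 1
        obtain ⟨π₁, h₁⟩ := ih (by omega) (by omega)
        refine ⟨π₁ ++ π₀, h₁.append ?_⟩
        have hs : glue C (v + (n : ℤ) • Δ)
            (fun i => vb i + (m : ℤ) * δb i + (n : ℤ) * Δb i)
            = glue C v (vb + δb) + w n := by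
          funext i
          simp only [glue, hw, Pi.add_apply, Pi.smul_apply, smul_eq_mul]
          split <;> ring
        have he : glue C (v + ((n + 1 : ℕ) : ℤ) • Δ)
            (fun i => vb i + (m : ℤ) * δb i + ((n + 1 : ℕ) : ℤ) * Δb i)
            = glue C (v + Δ) (vb + δb + Δb) + w n := by
          funext i
          simp only [glue, hw, Pi.add_apply, Pi.smul_apply, smul_eq_mul]
          split <;> push_cast <;> ring
        have hcast : ((n + 1 : ℕ) : ℤ) = ((n + 1 : ℕ) : ℤ) := by push_cast; ring
        rw [hcast, hs, he]
        exact h₀.shift (w n)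
          (hwnn n (by positivity) (by push_cast; omega))
  obtain ⟨π, hπ⟩ := key m hm le_rfl
  refine ⟨π, ?_⟩
  convert hπ using 2
  funext i
  simp only [Pi.add_apply, Pi.smul_apply, smul_eq_mul]
  ring
end

section
/- Let (d, Q, E) be a VASS, C, C' ⊆ {1,…,d}, q, q' ∈ Q (q' non-isolated, i.e. incident to some arc), v ∈ ℕ^C, v' ∈ ℕ^{C'}, v̄, δ̄ ∈ ℕ^{C̄}, v̄', δ̄' ∈ ℕ^{C̄'}, Δ ∈ ℕ^C, Δ' ∈ ℕ^{C'}, Δ̄ ∈ ℤ^{C̄}, Δ̄' ∈ ℤ^{C̄'}. Suppose there are: a pseudo-run π₀ from (q, v ⊕ v̄) to (q', v' ⊕ v̄'); a pseudo-run π₁ from (q, v ⊕ (v̄ + δ̄)) to (q', v' ⊕ (v̄' + δ̄')); a pseudo-run π from (q, v ⊕ (v̄ + δ̄)) to (q, (v + Δ) ⊕ (v̄ + δ̄ + Δ̄)); a pseudo-run π' from (q', (v' + Δ') ⊕ (v̄' + δ̄' + Δ̄')) to (q', v' ⊕ (v̄' + δ̄')); and fold(π₁) − fold(π₀) − fold(π)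 − fold(π') ≥ 1 on every arc of E. Then there is a pseudo-run from (q', Δ ⊕ (δ̄ + Δ̄)) to (q', Δ' ⊕ (δ̄' + Δ̄')). -/
/-!
Removing from `π₁` the arcs of `π`, `π₀` and `π'`, which concatenate to a walk `q → q → q' → q'`
with the same ends as `π₁`, leaves a multiset `M` of arcs in which every state has as many
incoming as outgoing arcs. By the fold hypothesis `M` still contains every arc of `π₁`, so `M`
is connected to `q'`, and Hierholzer's splicing of cycles arranges `M` into a closed walk `σ` at
`q'`. As a pseudo-run its displacement is that of `π₁` minus those of `π₀`, `π` and `π'`,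
which is exactly `Δ' ⊕ (δ̄' + Δ̄') - Δ ⊕ (δ̄ + Δ̄)`.
-/

theorem Multiset.coe_count_of_lawfulBEq {α : Type*} [DecidableEq α] [BEq α] [LawfulBEq α]
    (a : α) (l : List α) : Multiset.count a (l : Multiset α) = l.count a := by
  rw [Multiset.coe_count]
  congr
  exact lawful_beq_subsingleton _ _

namespace VASS

variable {Q L : Type*}

def IsWalk : List (Q × L × Q) → Q → Q → Prop
  | [], a, b => a = b
  | e :: w, a, b => e.1 = a ∧ IsWalk w e.2.2 b

def vertices (w : List (Q × L × Q)) (a : Q) : List Q := a :: w.map (·.2.2)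

/-- `g` has one more outgoing than incoming arc at `a`, one more incoming than outgoing arc
at `b`, and is balanced elsewhere (or everywhere, when `a = b`). -/
def IsFlow (g : Multiset (Q × L × Q)) (a b : Q) : Prop :=
  b ::ₘ g.map Prod.fst = a ::ₘ g.map (·.2.2)

def IsBalanced (g : Multiset (Q × L × Q)) : Prop :=
  g.map Prod.fst = g.map (·.2.2)

def displacement [AddCommMonoid L] (g : Multiset (Q × L × Q)) : L := (g.map (·.2.1)).sum

theorem displacement_add [AddCommMonoid L] (g h : Multiset (Q × L × Q)) :
    displacement (g + h) = displacement g + displacement h := by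
  simp [displacement]

section Walk

variable {w w₁ w₂ : List (Q × L × Q)} {a b c p : Q}

@[simp] theorem isWalk_nil : IsWalk ([] : List (Q × L × Q)) a b ↔ a = b := Iff.rfl

@[simp] theorem isWalk_cons {e : Q × L × Q} :
    IsWalk (e :: w) a b ↔ e.1 = a ∧ IsWalk w e.2.2 b := Iff.rfl

theorem isWalk_append : IsWalk (w₁ ++ w₂) a c ↔ ∃ b, IsWalk w₁ a b ∧ IsWalk w₂ b c := by
  induction w₁ generalizing a with
  | nil => simp
  | cons e t ih => simp [ih, and_assoc]

theorem IsWalk.fst_mem_vertices {e : Q × L × Q} (h : IsWalk w a b) (he : e ∈ w) :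
    e.1 ∈ vertices w a := by
  induction w generalizing a with
  | nil => simp at he
  | cons e' t ih =>
    obtain ⟨rfl, ht⟩ := h
    rcases List.mem_cons.mp he with rfl | he
    · exact List.mem_cons_self
    · exact List.mem_cons_of_mem _ (ih ht he)

theorem IsWalk.exists_eq_append (h : IsWalk w a b) (hp : p ∈ vertices w a) :
    ∃ w₁ w₂, w = w₁ ++ w₂ ∧ IsWalk w₁ a p ∧ IsWalk w₂ p b := by
  induction w generalizing a with
  | nil =>
    obtain rfl : p = a := by simpa [vertices] using hp
    exact ⟨[], [], rfl, rfl, h⟩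
  | cons e t ih =>
    rcases List.mem_cons.mp hp with rfl | hp
    · exact ⟨[], e :: t, rfl, rfl, h⟩
    · obtain ⟨w₁, w₂, rfl, h₁, h₂⟩ := ih h.2 hp
      exact ⟨e :: w₁, w₂, rfl, ⟨h.1, h₁⟩, h₂⟩

theorem IsWalk.exists_not_and {P : Q → Prop} (h : IsWalk w a b) (hp : p ∈ vertices w a)
    (hnp : ¬P p) (hb : P b) : ∃ e ∈ w, ¬P e.1 ∧ P e.2.2 := by
  induction w generalizing a p with
  | nil =>
    obtain rfl : p = a := by simpa [vertices] using hp
    exact (hnp ((show p = b from h) ▸ hb)).elim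
  | cons e t ih =>
    obtain ⟨rfl, ht⟩ := h
    rcases List.mem_cons.mp hp with rfl | hp
    · by_cases he : P e.2.2
      · exact ⟨e, List.mem_cons_self, hnp, he⟩
      · obtain ⟨e', he', h'⟩ := ih ht List.mem_cons_self he
        exact ⟨e', List.mem_cons_of_mem _ he', h'⟩
    · obtain ⟨e', he', h'⟩ := ih ht hp hnp
      exact ⟨e', List.mem_cons_of_mem _ he', h'⟩

theorem IsWalk.isFlow (h : IsWalk w a b) : IsFlow (w : Multiset (Q × L × Q)) a b := by
  induction w generalizing a with
  | nil => simp_all [IsFlow]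
  | cons e t ih =>
    obtain ⟨rfl, ht⟩ := h
    have := ih ht
    simp only [IsFlow, ← Multiset.cons_coe, Multiset.map_cons] at this ⊢
    rw [Multiset.cons_swap, this]

end Walk

section Flow

variable {g h : Multiset (Q × L × Q)} {a b p : Q}

theorem isFlow_self_iff : IsFlow g p p ↔ IsBalanced g := Multiset.cons_inj_right p

theorem IsFlow.isBalanced_sub [DecidableEq Q] [DecidableEq L] (hg : IsFlow g a b)
    (hh : IsFlow h a b) (hle : h ≤ g) : IsBalanced (g - h) := by
  obtain ⟨k, rfl⟩ := Multiset.le_iff_exists_add.mp hle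
  rw [add_tsub_cancel_left]
  unfold IsFlow at hg hh
  simp only [Multiset.map_add, ← Multiset.cons_add, hh] at hg
  exact add_left_cancel hg

theorem IsFlow.exists_isWalk (hg : IsFlow g a b) :
    ∃ w : List (Q × L × Q), IsWalk w a b ∧ (w : Multiset (Q × L × Q)) ≤ g := by
  induction g using Multiset.strongInductionOn generalizing a with
  | ih g ih =>
    by_cases hab : a = b
    · exact ⟨[], hab, Multiset.zero_le g⟩
    have ha : a ∈ g.map Prod.fst :=
      (Multiset.mem_cons.mp (hg ▸ Multiset.mem_cons_self a _)).resolve_left hab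
    obtain ⟨e, he, rfl⟩ := Multiset.mem_map.mp ha
    obtain ⟨g, rfl⟩ := Multiset.exists_cons_of_mem he
    have hg' : IsFlow g e.2.2 b := by
      unfold IsFlow at hg ⊢
      rw [Multiset.map_cons, Multiset.map_cons, Multiset.cons_swap] at hg
      exact (Multiset.cons_inj_right _).mp hg
    obtain ⟨w, hw, hwg⟩ := ih g (Multiset.lt_cons_self g e) hg'
    exact ⟨e :: w, ⟨rfl, hw⟩, Multiset.cons_le_cons e hwg⟩

theorem IsBalanced.exists_isWalk_of_mem {e : Q × L × Q} (hg : IsBalanced g) (he : e ∈ g) :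
    ∃ τ : List (Q × L × Q), τ ≠ [] ∧ IsWalk τ e.1 e.1 ∧ (τ : Multiset (Q × L × Q)) ≤ g := by
  obtain ⟨g, rfl⟩ := Multiset.exists_cons_of_mem he
  have hg' : IsFlow g e.2.2 e.1 := by
    unfold IsBalanced at hg
    rwa [Multiset.map_cons, Multiset.map_cons] at hg
  obtain ⟨w, hw, hwg⟩ := hg'.exists_isWalk
  exact ⟨e :: w, List.cons_ne_nil e w, ⟨rfl, hw⟩, Multiset.cons_le_cons e hwg⟩

end Flow

section Euler

variable {W σ : List (Q × L × Q)} {g M : Multiset (Q × L × Q)} {a b : Q}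

theorem exists_mem_fst_mem_vertices (hW : IsWalk W a b) (hσ : IsWalk σ b b) (hg : IsBalanced g)
    (hcover : ∀ e ∈ W, e ∈ σ ∨ e ∈ g) {e₀ : Q × L × Q} (he₀g : e₀ ∈ g) (he₀W : e₀ ∈ W) :
    ∃ e ∈ g, e.1 ∈ vertices σ b := by
  by_contra! hcon
  obtain ⟨e, heW, hout, hin⟩ := hW.exists_not_and (P := (· ∈ vertices σ b))
    (hW.fst_mem_vertices he₀W) (hcon e₀ he₀g) List.mem_cons_self
  rcases hcover e heW with heσ | heg
  · exact hout (hσ.fst_mem_vertices heσ)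
  · have : e.2.2 ∈ g.map Prod.fst := by rw [hg]; exact Multiset.mem_map_of_mem _ heg
    obtain ⟨e', he', hee'⟩ := Multiset.mem_map.mp this
    exact hcon e' he' (hee' ▸ hin)

variable [DecidableEq Q] [DecidableEq L]

theorem IsBalanced.exists_isWalk_gt (hM : IsBalanced M) (hW : IsWalk W a b)
    (hWM : ∀ e ∈ W, e ∈ M) (hMW : ∀ e ∈ M, e ∈ W) (hσ : IsWalk σ b b) (hσM : ↑σ < M) :
    ∃ σ' : List (Q × L × Q), IsWalk σ' b b ∧ (σ : Multiset (Q × L × Q)) < σ' ∧ ↑σ' ≤ M := by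
  set g := M - ↑σ
  have hg : IsBalanced g := (isFlow_self_iff.mpr hM).isBalanced_sub hσ.isFlow hσM.le
  have hσg : ↑σ + g = M := add_tsub_cancel_of_le hσM.le
  obtain ⟨e₀, he₀⟩ := Multiset.exists_mem_of_ne_zero (tsub_pos_of_lt hσM).ne'
  obtain ⟨e, heg, hev⟩ := exists_mem_fst_mem_vertices hW hσ hg
    (fun e he => by simpa [← hσg] using hWM e he) he₀
    (hMW e₀ (Multiset.mem_of_le tsub_le_self he₀))
  obtain ⟨τ, hτ, hτw, hτg⟩ := hg.exists_isWalk_of_mem heg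
  obtain ⟨σ₁, σ₂, rfl, hσ₁, hσ₂⟩ := hσ.exists_eq_append hev
  have hsplice :
      ((σ₁ ++ τ ++ σ₂ : List (Q × L × Q)) : Multiset (Q × L × Q)) = ↑(σ₁ ++ σ₂) + ↑τ := by
    simp only [← Multiset.coe_add]
    abel
  refine ⟨σ₁ ++ τ ++ σ₂, isWalk_append.mpr ⟨_, isWalk_append.mpr ⟨_, hσ₁, hτw⟩, hσ₂⟩, ?_, ?_⟩
  · rw [hsplice]
    exact lt_add_of_pos_right _ (pos_iff_ne_zero.mpr (by simpa using hτ))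
  · rw [hsplice, ← hσg]
    gcongr

theorem IsBalanced.exists_isWalk_coe_eq_of_le (hM : IsBalanced M) (hW : IsWalk W a b)
    (hWM : ∀ e ∈ W, e ∈ M) (hMW : ∀ e ∈ M, e ∈ W) {σ : List (Q × L × Q)} (hσ : IsWalk σ b b)
    (hσM : ↑σ ≤ M) :
    ∃ σ' : List (Q × L × Q), IsWalk σ' b b ∧ (σ' : Multiset (Q × L × Q)) = M := by
  rcases hσM.eq_or_lt with hσM | hσM
  · exact ⟨σ, hσ, hσM⟩
  obtain ⟨σ', hσ', hlt, hle⟩ := hM.exists_isWalk_gt hW hWM hMW hσ hσM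
  exact hM.exists_isWalk_coe_eq_of_le hW hWM hMW hσ' hle
termination_by M.card - σ.length
decreasing_by
  have := Multiset.card_lt_card hlt
  have := Multiset.card_le_card hle
  simp only [Multiset.coe_card] at *
  omega

theorem IsWalk.exists_isWalk_add_eq {W R : List (Q × L × Q)} (hW : IsWalk W a b)
    (hR : IsWalk R a b)
    (hcount : ∀ e ∈ W ++ R, Multiset.count e (R : Multiset (Q × L × Q)) < Multiset.count e ↑W) :
    ∃ σ : List (Q × L × Q), IsWalk σ b b ∧ (σ + R : Multiset (Q × L × Q)) = W := by
  have hle : (R : Multiset (Q × L × Q)) ≤ W := Multiset.le_iff_count.mpr fun e => by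
    by_cases he : e ∈ W ++ R
    · exact (hcount e he).le
    · simp_all
  obtain ⟨σ, hσ, hσM⟩ := (hW.isFlow.isBalanced_sub hR.isFlow hle).exists_isWalk_coe_eq_of_le hW
    (fun e he => Multiset.mem_sub.mpr (hcount e (List.mem_append_left R he)))
    (fun e he => Multiset.mem_coe.mp (Multiset.mem_of_le tsub_le_self he))
    (σ := []) rfl (Multiset.zero_le _)
  exact ⟨σ, hσ, hσM ▸ tsub_add_cancel_of_le hle⟩

end Euler

theorem isRunOn_empty_iff {d : ℕ} {Q : Type} {E : Finset (Arc Q d)} {π : List (Arc Q d)}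
    {a b : Q} {v w : Vec d} :
    IsRunOn E ∅ π a v b w ↔
      (∀ e ∈ π, e ∈ E) ∧ IsWalk π a b ∧ w = v + displacement (π : Multiset (Arc Q d)) := by
  constructor
  · intro h
    induction h with
    | nil => simp [displacement]
    | cons q q' q'' v v'' z π _ he _ ih =>
      obtain ⟨hE, hW, rfl⟩ := ih
      refine ⟨?_, ⟨rfl, hW⟩, ?_⟩
      · simpa [he] using hE
      · simp [displacement, add_assoc]
  · rintro ⟨hE, hW, rfl⟩
    induction π generalizing a v with
    | nil =>
      obtain rfl : a = b := hW
      simpa [displacement] using IsRunOn.nil a v (by simp)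
    | cons e π ih =>
      obtain ⟨a, z, a'⟩ := e
      obtain ⟨rfl, hW⟩ := hW
      have := ih (fun e he => hE e (List.mem_cons_of_mem _ he)) hW (v := v + z)
      simpa [displacement, add_assoc] using
        IsRunOn.cons _ _ _ _ _ _ _ (by simp) (hE _ List.mem_cons_self) this

end VASS

open VASS in
theorem claim_deltas_unconstrained_general {d : ℕ} {Q : Type} [DecidableEq Q]
    (E : Finset (Arc Q d)) (C C' : Finset (Fin d))
    (q q' : Q)
    (v v' vb δb vb' δb' Δ Δ' Δb Δb' : Vec d)
    (π₀ π₁ π π' : List (Arc Q d))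
    (hπ₀ : IsRunOn E ∅ π₀ q (glue C v vb) q' (glue C' v' vb'))
    (hπ₁ : IsRunOn E ∅ π₁ q (glue C v (vb + δb)) q' (glue C' v' (vb' + δb')))
    (hπ : IsRunOn E ∅ π q (glue C v (vb + δb)) q (glue C (v + Δ) (vb + δb + Δb)))
    (hπ' : IsRunOn E ∅ π' q' (glue C' (v' + Δ') (vb' + δb' + Δb'))
      q' (glue C' v' (vb' + δb')))
    (hfold : ∀ e ∈ E, π₀.count e + π.count e + π'.count e + 1 ≤ π₁.count e) :
    ∃ σ, IsRunOn E ∅ σ q' (glue C Δ (δb + Δb)) q' (glue C' Δ' (δb' + Δb')) := by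
  obtain ⟨hE₀, hW₀, hD₀⟩ := isRunOn_empty_iff.mp hπ₀
  obtain ⟨hE₁, hW₁, hD₁⟩ := isRunOn_empty_iff.mp hπ₁
  obtain ⟨hE, hW, hD⟩ := isRunOn_empty_iff.mp hπ
  obtain ⟨hE', hW', hD'⟩ := isRunOn_empty_iff.mp hπ'
  set rest := π ++ π₀ ++ π'
  have hcount : ∀ e ∈ π₁ ++ rest,
      Multiset.count e (rest : Multiset (Arc Q d)) < Multiset.count e ↑π₁ := fun e he => by
    have := hfold e (by
      simp only [rest, List.mem_append] at he
      rcases he with he | (he | he) | he <;> solve_by_elim)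
    simp only [Multiset.coe_count_of_lawfulBEq, rest, List.count_append]
    omega
  obtain ⟨σ, hσ, hσrest⟩ := hW₁.exists_isWalk_add_eq
    (isWalk_append.mpr ⟨q', isWalk_append.mpr ⟨q, hW, hW₀⟩, hW'⟩) hcount
  refine ⟨σ, isRunOn_empty_iff.mpr ⟨fun e he => hE₁ e ?_, hσ, ?_⟩⟩
  · exact Multiset.mem_coe.mp (hσrest ▸ Multiset.mem_add.mpr (.inl he))
  · have hdisp := congrArg displacement hσrest
    simp only [← Multiset.coe_add, displacement_add] at hdisp
    funext i
    have := congrFun hdisp i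
    have := congrFun hD₀ i
    have := congrFun hD₁ i
    have := congrFun hD i
    have := congrFun hD' i
    simp only [glue, Pi.add_apply] at *
    split_ifs at * <;> linarith

/-- Claim 4: from pseudo-runs `π₀, π₁, π, π'` with
`fold(π₁) - fold(π₀) - fold(π) - fold(π') ≥ 1` on every arc, one gets a pseudo-run from
`(q', Δ ⊕ (δ̄ + Δ̄))` to `(q', Δ' ⊕ (δ̄' + Δ̄'))`. -/
theorem claim_deltas_unconstrained {d : ℕ} {Q : Type} [DecidableEq Q]
    (hd : 1 ≤ d) (E : Finset (Arc Q d)) (C C' : Finset (Fin d))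
    (q q' : Q)
    (hq' : ∃ e ∈ E, e.1 = q' ∨ e.2.2 = q')
    (v v' vb δb vb' δb' Δ Δ' Δb Δb' : Vec d)
    (hv : ∀ i ∈ C, 0 ≤ v i) (hv' : ∀ i ∈ C', 0 ≤ v' i)
    (hvb : ∀ i ∉ C, 0 ≤ vb i) (hδb : ∀ i ∉ C, 0 ≤ δb i)
    (hvb' : ∀ i ∉ C', 0 ≤ vb' i) (hδb' : ∀ i ∉ C', 0 ≤ δb' i)
    (hΔ : ∀ i ∈ C, 0 ≤ Δ i) (hΔ' : ∀ i ∈ C', 0 ≤ Δ' i)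
    (π₀ π₁ π π' : List (Arc Q d))
    (hπ₀ : IsRunOn E ∅ π₀ q (glue C v vb) q' (glue C' v' vb'))
    (hπ₁ : IsRunOn E ∅ π₁ q (glue C v (vb + δb)) q' (glue C' v' (vb' + δb')))
    (hπ : IsRunOn E ∅ π q (glue C v (vb + δb)) q (glue C (v + Δ) (vb + δb + Δb)))
    (hπ' : IsRunOn E ∅ π' q' (glue C' (v' + Δ') (vb' + δb' + Δb'))
      q' (glue C' v' (vb' + δb')))
    (hfold : ∀ e ∈ E, π₀.count e + π.count e + π'.count e + 1 ≤ π₁.count e) :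
    ∃ σ, IsRunOn E ∅ σ q' (glue C Δ (δb + Δb)) q' (glue C' Δ' (δb' + Δb')) :=
  claim_deltas_unconstrained_general E C C' q q' v v' vb δb vb' δb' Δ Δ' Δb Δb' π₀ π₁ π π' hπ₀ hπ₁
    hπ hπ' hfold
end
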